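/- Let E be a symmetric monoidal category compatible with small colimits and f : A → B a morphism of commutative algebra objects such that the canonical map B ⊗_A B → B is an isomorphism. Then the forgetful (restriction) functor f_* : Mod_B(E) → Mod_A(E) is fully faithful. -/

import Mathlib

/-!
Let `g : M ⟶ N` be an `A`-linear map of `B`-modules. The map `B ⊗ B ⊗ M ⟶ N`,
`b ⊗ b' ⊗ m ↦ b • g (b' • m)`, is `A`-balanced in the middle precisely because `g` is `A`-linear,
so it descends to `(B ⊗_A B) ⊗ M`, which is still a coequalizer since `- ⊗ M` preserves colimits.
As multiplication identifies `B ⊗_A B` with `B`, the elements `1 ⊗ b` and `b ⊗ 1` agree there;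
evaluating the descended map on them gives `g (b • m) = b • g m`.
-/

open CategoryTheory CategoryTheory.Limits CategoryTheory.MonoidalCategory CategoryTheory.MonObj

universe v u

namespace Stmt4

variable {C : Type u} [Category.{v} C] [MonoidalCategory C] [SymmetricCategory C]

variable {A B : CommMon C}

/-- Multiply `A` into the left factor: `B ⊗ (A ⊗ B) ⟶ B ⊗ B`. -/
def actLeft (f : A ⟶ B) : B.X ⊗ (A.X ⊗ B.X) ⟶ B.X ⊗ B.X :=
  (α_ B.X A.X B.X).inv ≫ (((B.X ◁ f.hom.hom) ≫ μ[B.X]) ▷ B.X)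

/-- Multiply `A` into the right factor: `B ⊗ (A ⊗ B) ⟶ B ⊗ B`. -/
def actRight (f : A ⟶ B) : B.X ⊗ (A.X ⊗ B.X) ⟶ B.X ⊗ B.X :=
  B.X ◁ ((f.hom.hom ▷ B.X) ≫ μ[B.X])

/-- The multiplication of `B` coequalizes the two actions, so that it descends to the
relative tensor product `B ⊗_A B`. -/
lemma mul_coeq (f : A ⟶ B) : actLeft f ≫ μ[B.X] = actRight f ≫ μ[B.X] := by
  have key : ∀ g : A.X ⟶ B.X, ((α_ B.X A.X B.X).inv ≫ (((B.X ◁ g) ≫ μ[B.X]) ▷ B.X)) ≫ μ[B.X] =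
      (B.X ◁ ((g ▷ B.X) ≫ μ[B.X])) ≫ μ[B.X] := by
    intro g
    simp only [comp_whiskerRight, MonoidalCategory.whiskerLeft_comp, Category.assoc,
      MonObj.mul_assoc]
    slice_lhs 2 3 => rw [associator_naturality_middle]
    simp
  exact key f.hom.hom

end Stmt4

namespace CategoryTheory.ModObj

variable {C : Type*} [Category C] [MonoidalCategory C] {R : C} [MonObj R]
  {M N : C} [ModObj R M] [ModObj R N]

def smulCompSmul (g : M ⟶ N) : (R ⊗ R) ⊗ M ⟶ N :=
  (α_ R R M).hom ≫ R ◁ (γ[R, M] ≫ g) ≫ γ[R, N]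

lemma smulCompSmul_balanced {X : C} (φ : X ⟶ R) (g : M ⟶ N)
    (hg : φ ▷ M ≫ γ[R, M] ≫ g = X ◁ g ≫ φ ▷ N ≫ γ[R, N]) :
    ((α_ R X R).inv ≫ ((R ◁ φ) ≫ μ) ▷ R) ▷ M ≫ smulCompSmul g =
      (R ◁ ((φ ▷ R) ≫ μ)) ▷ M ≫ smulCompSmul g := by
  have hN : ((R ◁ φ) ≫ μ) ▷ N ≫ γ[R, N] = (α_ R X N).hom ≫ R ◁ (φ ▷ N ≫ γ[R, N]) ≫ γ[R, N] := by
    simp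
  have hM : ((φ ▷ R) ≫ μ) ▷ M ≫ γ[R, M] = (α_ X R M).hom ≫ X ◁ γ[R, M] ≫ φ ▷ M ≫ γ[R, M] := by
    simp [whisker_exchange_assoc]
  -- both sides become `b ⊗ x ⊗ b' ⊗ m ↦ b • φ x • g (b' • m)`
  rw [smulCompSmul, comp_whiskerRight, Category.assoc, associator_naturality_left_assoc,
    ← whisker_exchange_assoc, hN, associator_naturality_middle_assoc,
    ← MonoidalCategory.whiskerLeft_comp_assoc, reassoc_of% hM, hg]
  monoidal

lemma smulCompSmul_unit_left (g : M ⟶ N) :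
    ((λ_ R).inv ≫ η ▷ R) ▷ M ≫ smulCompSmul g = γ[R, M] ≫ g := by
  rw [smulCompSmul, comp_whiskerRight, Category.assoc, associator_naturality_left_assoc,
    ← whisker_exchange_assoc, one_smul_self]
  monoidal

lemma smulCompSmul_unit_right (g : M ⟶ N) :
    ((ρ_ R).inv ≫ R ◁ η) ▷ M ≫ smulCompSmul g = R ◁ g ≫ γ[R, N] := by
  rw [smulCompSmul, comp_whiskerRight, Category.assoc, associator_naturality_middle_assoc,
    ← MonoidalCategory.whiskerLeft_comp_assoc, one_smul_self_assoc]
  monoidal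

end CategoryTheory.ModObj

namespace Stmt4

open ModObj

variable {C : Type u} [Category.{v} C] [MonoidalCategory C] [SymmetricCategory C]

variable {A B : CommMon C}

lemma unitLeft_comp_π_eq_unitRight_comp_π (f : A ⟶ B) [HasCoequalizer (actLeft f) (actRight f)]
    (hiso : IsIso (coequalizer.desc μ[B.X] (mul_coeq f))) :
    ((λ_ B.X).inv ≫ η ▷ B.X) ≫ coequalizer.π (actLeft f) (actRight f) =
      ((ρ_ B.X).inv ≫ B.X ◁ η) ≫ coequalizer.π (actLeft f) (actRight f) := by
  rw [← cancel_mono (coequalizer.desc μ[B.X] (mul_coeq f))]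
  simp

lemma smul_hom_of_smul_hom_restrictScalars (f : A ⟶ B) [HasCoequalizer (actLeft f) (actRight f)]
    (hiso : IsIso (coequalizer.desc μ[B.X] (mul_coeq f))) {M N : Mod C B.X}
    [PreservesColimit (parallelPair (actLeft f) (actRight f)) (tensorRight M.X)] (g : M.X ⟶ N.X)
    (hg : f.hom.hom ▷ M.X ≫ γ[B.X, M.X] ≫ g = A.X ◁ g ≫ f.hom.hom ▷ N.X ≫ γ[B.X, N.X]) :
    γ[B.X, M.X] ≫ g = B.X ◁ g ≫ γ[B.X, N.X] := by
  obtain ⟨s, hs⟩ := Cofork.IsColimit.desc'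
    (isColimitOfHasCoequalizerOfPreservesColimit (tensorRight M.X) (actLeft f) (actRight f))
    (smulCompSmul g) (smulCompSmul_balanced (R := B.X) f.hom.hom g hg)
  have hπs (u : B.X ⟶ B.X ⊗ B.X) :
      (u ≫ coequalizer.π (actLeft f) (actRight f)) ▷ M.X ≫ s = u ▷ M.X ≫ smulCompSmul g := by
    rw [comp_whiskerRight, Category.assoc]
    exact congrArg (u ▷ M.X ≫ ·) hs
  rw [← smulCompSmul_unit_left, ← smulCompSmul_unit_right, ← hπs, ← hπs,
    unitLeft_comp_π_eq_unitRight_comp_π f hiso]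

theorem stmt4 [HasColimits C]
    [∀ X : C, PreservesColimits (tensorLeft X)] [∀ X : C, PreservesColimits (tensorRight X)]
    (f : A ⟶ B) (hiso : IsIso (coequalizer.desc μ[B.X] (mul_coeq f))) :
    (Mod.comap (D := C) f.hom.hom).Full ∧
      (Mod.comap (D := C) f.hom.hom).Faithful := by
  refine ⟨⟨fun {M N} u => ⟨Mod.Hom.mk' u.hom ?_, rfl⟩⟩, ⟨fun h => ?_⟩⟩
  · exact smul_hom_of_smul_hom_restrictScalars f hiso u.hom
      ((Category.assoc _ _ _).symm.trans (Mod.Hom.isModHom u).smul_hom)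
  · exact Mod.hom_ext _ _ congr(($h).hom)

end Stmt4
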